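/- Let σ₁, σ₂ be the automorphisms of F₂ determined by σ₁(a) = a b a⁻¹, σ₁(b) = a and σ₂(a) = a, σ₂(b) = a⁻¹ b⁻¹. Both preserve R and hence induce ℤ-linear endomorphisms of R^{ab}, which satisfy: σ₁( (αⁱβʲ)·[[b,a]] ) = −(α^{j+1}βⁱ)·[[b,a]], σ₂( (αⁱβʲ)·[[b,a]] ) = −(α^{i−j}β^{−j})·[[b⁻¹,a⁻¹]], σ₁( (αⁱ)·[bⁿ] ) = (βⁱ)·[aⁿ], σ₁( (βʲ)·[aⁿ] ) = (α^{j+1})·[bⁿ], σ₂( (αⁱ)·[bⁿ] ) = −(αⁱ)·[(ba)ⁿ], and σ₂( (βʲ)·[aⁿ] ) = ((βα)^{−j})·[aⁿ]. -/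

import Mathlib

namespace Fermat

open scoped commutatorElement

/-- The free group on two generators. -/
abbrev F2 : Type := FreeGroup (Fin 2)

/-- The first generator `a` of `F₂`. -/
def a : F2 := FreeGroup.of 0

/-- The second generator `b` of `F₂`. -/
def b : F2 := FreeGroup.of 1

/-- The group `H₀ = (ℤ/nℤ) × (ℤ/nℤ)`, written multiplicatively. -/
abbrev H0 (n : ℕ) : Type := Multiplicative (ZMod n × ZMod n)

/-- The homomorphism `φ : F₂ → (ℤ/nℤ) × (ℤ/nℤ)` with `φ(a) = (1,0)`, `φ(b) = (0,1)`. -/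
def phi (n : ℕ) : F2 →* H0 n :=
  FreeGroup.lift fun i =>
    Multiplicative.ofAdd (if i = (0 : Fin 2) then ((1 : ZMod n), (0 : ZMod n)) else (0, 1))

/-- `R = ker φ`, the fundamental group of the open Fermat curve of exponent `n`. -/
abbrev R (n : ℕ) : Subgroup F2 := (phi n).ker

theorem pow_n_mem (n : ℕ) (x : F2) : x ^ n ∈ R n := by
  rw [MonoidHom.mem_ker, map_pow]
  have h : n • Multiplicative.toAdd (phi n x) = 0 := by
    ext <;> simp [ZMod.natCast_self]
  calc (phi n x) ^ n
      = Multiplicative.ofAdd (n • Multiplicative.toAdd (phi n x)) := by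
        rw [ofAdd_nsmul, ofAdd_toAdd]
    _ = 1 := by rw [h]; rfl

theorem commutator_mem (n : ℕ) (x y : F2) : ⁅x, y⁆ ∈ R n := by
  rw [MonoidHom.mem_ker, map_commutatorElement, commutatorElement_eq_one_iff_commute]
  exact Commute.all _ _

theorem conj_mem (n : ℕ) (g x : F2) (hx : x ∈ R n) : g * x * g⁻¹ ∈ R n :=
  Subgroup.Normal.conj_mem inferInstance x hx g

/-- The abelianization `R^{ab} = R/R'` of the fundamental group `R`. -/
abbrev Ab (n : ℕ) : Type := Abelianization ↥(R n)

/-- The class `[x] ∈ R^{ab}` of an element `x ∈ R`. -/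
def cls (n : ℕ) (x : F2) (hx : x ∈ R n) : Ab n := Abelianization.of ⟨x, hx⟩

/-- The class `[g x g⁻¹] ∈ R^{ab}`; for `h = φ(g) ∈ H₀` this is the value `h·[x]` of the
conjugation action of `H₀` on `R^{ab}`. -/
def conjCl (n : ℕ) (g x : F2) (hx : x ∈ R n) : Ab n :=
  cls n (g * x * g⁻¹) (conj_mem n g x hx)

/-- The endomorphism of `R^{ab}` induced by conjugation by `g ∈ F₂`; for `h = φ(g)` this
is the action of `h ∈ H₀` on `R^{ab}`. -/
def conjHom (n : ℕ) (g : F2) : Ab n →* Ab n :=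
  Abelianization.map (MulAut.conjNormal g).toMonoidHom

end Fermat

/-! σ₁ and σ₂ act on `H₀ = F₂ / R` through the automorphisms `(i, j) ↦ (j, i)` and
`(i, j) ↦ (i - j, -j)` of `(ℤ/nℤ)²`, so they preserve `R = ker φ`. Conjugation by an element
of `R` is trivial on `R^{ab}`, so the class `[g x g⁻¹]` depends on `g` only through `φ(g)`.
Each formula then reduces to computing `σ(x)` in `F₂` for `x = [b,a], aⁿ, bⁿ`, together with
`φ(σ(g))`. -/

theorem Subgroup.map_ker_eq_of_comp_eq {G H : Type*} [Group G] [Group H] (φ : G →* H)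
    (σ : G ≃* G) (ψ : H ≃* H) (h : φ.comp σ.toMonoidHom = ψ.toMonoidHom.comp φ) :
    φ.ker.map σ.toMonoidHom = φ.ker := by
  have hcomap : φ.ker.comap σ.toMonoidHom = φ.ker := by
    rw [MonoidHom.comap_ker, h, MonoidHom.ker_comp_of_injective _ _ ψ.injective]
  calc φ.ker.map σ.toMonoidHom = (φ.ker.comap σ.toMonoidHom).map σ.toMonoidHom := by
        rw [hcomap]
    _ = φ.ker := Subgroup.map_comap_eq_self_of_surjective σ.surjective _

theorem Abelianization.of_conj_eq_of_mul_inv_mem {G : Type*} [Group G] {N : Subgroup G}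
    [hN : N.Normal] {g₁ g₂ x : G} (hx : x ∈ N) (hg : g₁ * g₂⁻¹ ∈ N) :
    Abelianization.of (⟨g₁ * x * g₁⁻¹, hN.conj_mem x hx g₁⟩ : N) =
      Abelianization.of ⟨g₂ * x * g₂⁻¹, hN.conj_mem x hx g₂⟩ := by
  have hconj : (⟨g₁ * x * g₁⁻¹, hN.conj_mem x hx g₁⟩ : N) =
      ⟨g₁ * g₂⁻¹, hg⟩ * ⟨g₂ * x * g₂⁻¹, hN.conj_mem x hx g₂⟩ * (⟨g₁ * g₂⁻¹, hg⟩)⁻¹ :=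
    Subtype.ext (by simp only [Subgroup.coe_mul, Subgroup.coe_inv]; group)
  rw [hconj, map_mul, map_mul, map_inv, mul_inv_cancel_comm]

namespace Fermat

open scoped commutatorElement

variable {n : ℕ}

@[simp] lemma phi_a : phi n a = Multiplicative.ofAdd (1, 0) := by simp [phi, a]

@[simp] lemma phi_b : phi n b = Multiplicative.ofAdd (0, 1) := by simp [phi, b]

lemma conjCl_eq_of_phi_eq {g₁ g₂ x : F2} (hx : x ∈ R n) (hg : phi n g₁ = phi n g₂) :
    conjCl n g₁ x hx = conjCl n g₂ x hx :=
  Abelianization.of_conj_eq_of_mul_inv_mem hx (by simp [hg])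

lemma conjCl_conj (g h x : F2) (hx : x ∈ R n) (hx' : h * x * h⁻¹ ∈ R n) :
    conjCl n g (h * x * h⁻¹) hx' = conjCl n (g * h) x hx := by
  unfold conjCl cls
  congr 2
  group

lemma conjCl_inv (g x : F2) (hx : x ∈ R n) (hx' : x⁻¹ ∈ R n) :
    conjCl n g x⁻¹ hx' = (conjCl n g x hx)⁻¹ := by
  rw [conjCl, cls, conjCl, cls, ← map_inv]
  congr 1
  ext
  simp only [Subgroup.coe_inv]
  group

def IsInducedBy (τ : Ab n →* Ab n) (σ : F2 →* F2) : Prop :=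
  ∀ (x : F2) (hx : x ∈ R n) (hx' : σ x ∈ R n), τ (cls n x hx) = cls n (σ x) hx'

lemma IsInducedBy.apply_conjCl {σ : F2 →* F2} {τ : Ab n →* Ab n} (hτ : IsInducedBy τ σ)
    (g : F2) {x y : F2} (hx : x ∈ R n) (hy : y ∈ R n) (hxy : σ x = y) :
    τ (conjCl n g x hx) = conjCl n (σ g) y hy := by
  subst hxy
  rw [conjCl, hτ _ _ (by simpa only [map_mul, map_inv] using conj_mem n (σ g) _ hy)]
  simp only [conjCl, map_mul, map_inv]

def swapH0 (n : ℕ) : H0 n ≃* H0 n := AddEquiv.toMultiplicative AddEquiv.prodComm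

def shearH0 (n : ℕ) : H0 n ≃* H0 n := AddEquiv.toMultiplicative
  { toFun p := (p.1 - p.2, -p.2)
    invFun p := (p.1 - p.2, -p.2)
    left_inv p := by simp
    right_inv p := by simp
    map_add' p q := by ext <;> simp only [Prod.fst_add, Prod.snd_add] <;> abel }

section Sigma1

variable {σ₁ : F2 →* F2}

lemma phi_comp_sigma1 (hσ₁a : σ₁ a = a * b * a⁻¹) (hσ₁b : σ₁ b = a) :
    (phi n).comp σ₁ = (swapH0 n).toMonoidHom.comp (phi n) := by
  refine FreeGroup.ext_hom _ _ fun i => ?_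
  fin_cases i
  · change phi n (σ₁ a) = swapH0 n (phi n a)
    simp [hσ₁a, swapH0, ← ofAdd_add, ← ofAdd_neg]
  · change phi n (σ₁ b) = swapH0 n (phi n b)
    simp [hσ₁b, swapH0]

lemma sigma1_commutator (hσ₁a : σ₁ a = a * b * a⁻¹) (hσ₁b : σ₁ b = a) :
    σ₁ ⁅b, a⁆ = a * ⁅b, a⁆⁻¹ * a⁻¹ := by
  rw [map_commutatorElement, hσ₁a, hσ₁b]
  simp only [commutatorElement_def]
  group

lemma phi_sigma1 (hσ₁a : σ₁ a = a * b * a⁻¹) (hσ₁b : σ₁ b = a) (x : F2) :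
    phi n (σ₁ x) = swapH0 n (phi n x) :=
  DFunLike.congr_fun (phi_comp_sigma1 hσ₁a hσ₁b) x

variable {τ₁ : Ab n →* Ab n}

lemma IsInducedBy.sigma1_conjCl_commutator (hτ₁ : IsInducedBy τ₁ σ₁)
    (hσ₁a : σ₁ a = a * b * a⁻¹) (hσ₁b : σ₁ b = a) (i j : ℕ) :
    τ₁ (conjCl n (a ^ i * b ^ j) ⁅b, a⁆ (commutator_mem n b a)) =
      (conjCl n (a ^ (j + 1) * b ^ i) ⁅b, a⁆ (commutator_mem n b a))⁻¹ := by
  rw [hτ₁.apply_conjCl _ _ (conj_mem n a _ (inv_mem (commutator_mem n b a)))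
    (sigma1_commutator hσ₁a hσ₁b), conjCl_conj _ _ _ (inv_mem (commutator_mem n b a)),
    conjCl_inv _ _ (commutator_mem n b a)]
  congr 1
  refine conjCl_eq_of_phi_eq _ ?_
  simp [phi_sigma1 hσ₁a hσ₁b, swapH0, ← ofAdd_nsmul, ← ofAdd_add]

lemma IsInducedBy.sigma1_conjCl_pow_b (hτ₁ : IsInducedBy τ₁ σ₁)
    (hσ₁a : σ₁ a = a * b * a⁻¹) (hσ₁b : σ₁ b = a) (i : ℕ) :
    τ₁ (conjCl n (a ^ i) (b ^ n) (pow_n_mem n b)) = conjCl n (b ^ i) (a ^ n) (pow_n_mem n a) := by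
  rw [hτ₁.apply_conjCl _ _ (pow_n_mem n a) (by rw [map_pow, hσ₁b])]
  refine conjCl_eq_of_phi_eq _ ?_
  simp [phi_sigma1 hσ₁a hσ₁b, swapH0, ← ofAdd_nsmul]

lemma IsInducedBy.sigma1_conjCl_pow_a (hτ₁ : IsInducedBy τ₁ σ₁)
    (hσ₁a : σ₁ a = a * b * a⁻¹) (hσ₁b : σ₁ b = a) (j : ℕ) :
    τ₁ (conjCl n (b ^ j) (a ^ n) (pow_n_mem n a)) =
      conjCl n (a ^ (j + 1)) (b ^ n) (pow_n_mem n b) := by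
  rw [hτ₁.apply_conjCl _ _ (conj_mem n a _ (pow_n_mem n b)) (by rw [map_pow, hσ₁a, conj_pow]),
    map_pow, hσ₁b, conjCl_conj, pow_succ]

end Sigma1

section Sigma2

variable {σ₂ : F2 →* F2}

lemma phi_comp_sigma2 (hσ₂a : σ₂ a = a) (hσ₂b : σ₂ b = a⁻¹ * b⁻¹) :
    (phi n).comp σ₂ = (shearH0 n).toMonoidHom.comp (phi n) := by
  refine FreeGroup.ext_hom _ _ fun i => ?_
  fin_cases i
  · change phi n (σ₂ a) = shearH0 n (phi n a)
    simp [hσ₂a, shearH0]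
  · change phi n (σ₂ b) = shearH0 n (phi n b)
    simp [hσ₂b, shearH0, ← ofAdd_add, ← ofAdd_neg]

lemma phi_sigma2 (hσ₂a : σ₂ a = a) (hσ₂b : σ₂ b = a⁻¹ * b⁻¹) (x : F2) :
    phi n (σ₂ x) = shearH0 n (phi n x) :=
  DFunLike.congr_fun (phi_comp_sigma2 hσ₂a hσ₂b) x

lemma sigma2_commutator (hσ₂a : σ₂ a = a) (hσ₂b : σ₂ b = a⁻¹ * b⁻¹) :
    σ₂ ⁅b, a⁆ = ⁅b⁻¹, a⁻¹⁆⁻¹ := by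
  rw [map_commutatorElement, hσ₂a, hσ₂b]
  simp only [commutatorElement_def]
  group

variable {τ₂ : Ab n →* Ab n}

lemma IsInducedBy.sigma2_conjCl_commutator (hτ₂ : IsInducedBy τ₂ σ₂)
    (hσ₂a : σ₂ a = a) (hσ₂b : σ₂ b = a⁻¹ * b⁻¹) (i j : ℕ) :
    τ₂ (conjCl n (a ^ i * b ^ j) ⁅b, a⁆ (commutator_mem n b a)) =
      (conjCl n (a ^ ((i : ℤ) - (j : ℤ)) * b ^ (-(j : ℤ)))
        ⁅b⁻¹, a⁻¹⁆ (commutator_mem n b⁻¹ a⁻¹))⁻¹ := by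
  rw [hτ₂.apply_conjCl _ _ (inv_mem (commutator_mem n b⁻¹ a⁻¹)) (sigma2_commutator hσ₂a hσ₂b),
    conjCl_inv _ _ (commutator_mem n b⁻¹ a⁻¹)]
  congr 1
  refine conjCl_eq_of_phi_eq _ ?_
  simp [phi_sigma2 hσ₂a hσ₂b, shearH0, ← ofAdd_nsmul, ← ofAdd_zsmul, ← ofAdd_add, ← ofAdd_neg,
    sub_eq_add_neg]

lemma IsInducedBy.sigma2_conjCl_pow_b (hτ₂ : IsInducedBy τ₂ σ₂)
    (hσ₂a : σ₂ a = a) (hσ₂b : σ₂ b = a⁻¹ * b⁻¹) (i : ℕ) :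
    τ₂ (conjCl n (a ^ i) (b ^ n) (pow_n_mem n b)) =
      (conjCl n (a ^ i) ((b * a) ^ n) (pow_n_mem n (b * a)))⁻¹ := by
  rw [hτ₂.apply_conjCl _ _ (inv_mem (pow_n_mem n (b * a)))
      (by rw [map_pow, hσ₂b, ← mul_inv_rev, inv_pow]),
    map_pow, hσ₂a, conjCl_inv _ _ (pow_n_mem n (b * a))]

lemma IsInducedBy.sigma2_conjCl_pow_a (hτ₂ : IsInducedBy τ₂ σ₂)
    (hσ₂a : σ₂ a = a) (hσ₂b : σ₂ b = a⁻¹ * b⁻¹) (j : ℕ) :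
    τ₂ (conjCl n (b ^ j) (a ^ n) (pow_n_mem n a)) =
      conjCl n ((b * a) ^ (-(j : ℤ))) (a ^ n) (pow_n_mem n a) := by
  rw [hτ₂.apply_conjCl _ _ (pow_n_mem n a) (by rw [map_pow, hσ₂a]), map_pow, hσ₂b,
    zpow_neg, zpow_natCast, ← inv_pow, mul_inv_rev]

end Sigma2

theorem statement9_general (n : ℕ) (σ₁ σ₂ : F2 ≃* F2)
    (hσ₁a : σ₁ a = a * b * a⁻¹) (hσ₁b : σ₁ b = a)
    (hσ₂a : σ₂ a = a) (hσ₂b : σ₂ b = a⁻¹ * b⁻¹) :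
    Subgroup.map σ₁.toMonoidHom (R n) = R n ∧
    Subgroup.map σ₂.toMonoidHom (R n) = R n ∧
    (∀ τ₁ : Ab n →* Ab n,
      (∀ (x : F2) (hx : x ∈ R n) (hx' : σ₁ x ∈ R n), τ₁ (cls n x hx) = cls n (σ₁ x) hx') →
      (∀ i j : ℕ,
        τ₁ (conjCl n (a ^ i * b ^ j) ⁅b, a⁆ (commutator_mem n b a)) =
          (conjCl n (a ^ (j + 1) * b ^ i) ⁅b, a⁆ (commutator_mem n b a))⁻¹) ∧
      (∀ i : ℕ, τ₁ (conjCl n (a ^ i) (b ^ n) (pow_n_mem n b)) =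
          conjCl n (b ^ i) (a ^ n) (pow_n_mem n a)) ∧
      (∀ j : ℕ, τ₁ (conjCl n (b ^ j) (a ^ n) (pow_n_mem n a)) =
          conjCl n (a ^ (j + 1)) (b ^ n) (pow_n_mem n b))) ∧
    (∀ τ₂ : Ab n →* Ab n,
      (∀ (x : F2) (hx : x ∈ R n) (hx' : σ₂ x ∈ R n), τ₂ (cls n x hx) = cls n (σ₂ x) hx') →
      (∀ i j : ℕ,
        τ₂ (conjCl n (a ^ i * b ^ j) ⁅b, a⁆ (commutator_mem n b a)) =
          (conjCl n (a ^ ((i : ℤ) - (j : ℤ)) * b ^ (-(j : ℤ)))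
            ⁅b⁻¹, a⁻¹⁆ (commutator_mem n b⁻¹ a⁻¹))⁻¹) ∧
      (∀ i : ℕ, τ₂ (conjCl n (a ^ i) (b ^ n) (pow_n_mem n b)) =
          (conjCl n (a ^ i) ((b * a) ^ n) (pow_n_mem n (b * a)))⁻¹) ∧
      (∀ j : ℕ, τ₂ (conjCl n (b ^ j) (a ^ n) (pow_n_mem n a)) =
          conjCl n ((b * a) ^ (-(j : ℤ))) (a ^ n) (pow_n_mem n a))) := by
  refine ⟨Subgroup.map_ker_eq_of_comp_eq _ _ _ (phi_comp_sigma1 hσ₁a hσ₁b),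
    Subgroup.map_ker_eq_of_comp_eq _ _ _ (phi_comp_sigma2 hσ₂a hσ₂b),
    fun τ₁ hτ₁ => ?_, fun τ₂ hτ₂ => ?_⟩
  · replace hτ₁ : IsInducedBy τ₁ σ₁.toMonoidHom := hτ₁
    exact ⟨hτ₁.sigma1_conjCl_commutator hσ₁a hσ₁b, hτ₁.sigma1_conjCl_pow_b hσ₁a hσ₁b,
      hτ₁.sigma1_conjCl_pow_a hσ₁a hσ₁b⟩
  · replace hτ₂ : IsInducedBy τ₂ σ₂.toMonoidHom := hτ₂
    exact ⟨hτ₂.sigma2_conjCl_commutator hσ₂a hσ₂b, hτ₂.sigma2_conjCl_pow_b hσ₂a hσ₂b,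
      hτ₂.sigma2_conjCl_pow_a hσ₂a hσ₂b⟩

/-- let `σ₁, σ₂` be the automorphisms of `F₂` with `σ₁(a) = aba⁻¹`,
`σ₁(b) = a`, `σ₂(a) = a`, `σ₂(b) = a⁻¹b⁻¹`.  Both preserve `R`, and the induced
endomorphisms `τ₁, τ₂` of `R^{ab}` (characterized by `τ([x]) = [σ(x)]`) satisfy the
stated formulas, where `(αⁱβʲ)·[x] = [aⁱbʲ x b⁻ʲa⁻ⁱ]` is the conjugation action of
`H₀` and `−` is written multiplicatively as inversion in the abelianization. -/
theorem statement9 (n : ℕ) (hn : 2 ≤ n) (σ₁ σ₂ : F2 ≃* F2)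
    (hσ₁a : σ₁ a = a * b * a⁻¹) (hσ₁b : σ₁ b = a)
    (hσ₂a : σ₂ a = a) (hσ₂b : σ₂ b = a⁻¹ * b⁻¹) :
    Subgroup.map σ₁.toMonoidHom (R n) = R n ∧
    Subgroup.map σ₂.toMonoidHom (R n) = R n ∧
    (∀ τ₁ : Ab n →* Ab n,
      (∀ (x : F2) (hx : x ∈ R n) (hx' : σ₁ x ∈ R n), τ₁ (cls n x hx) = cls n (σ₁ x) hx') →
      (∀ i j : ℕ,
        τ₁ (conjCl n (a ^ i * b ^ j) ⁅b, a⁆ (commutator_mem n b a)) =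
          (conjCl n (a ^ (j + 1) * b ^ i) ⁅b, a⁆ (commutator_mem n b a))⁻¹) ∧
      (∀ i : ℕ, τ₁ (conjCl n (a ^ i) (b ^ n) (pow_n_mem n b)) =
          conjCl n (b ^ i) (a ^ n) (pow_n_mem n a)) ∧
      (∀ j : ℕ, τ₁ (conjCl n (b ^ j) (a ^ n) (pow_n_mem n a)) =
          conjCl n (a ^ (j + 1)) (b ^ n) (pow_n_mem n b))) ∧
    (∀ τ₂ : Ab n →* Ab n,
      (∀ (x : F2) (hx : x ∈ R n) (hx' : σ₂ x ∈ R n), τ₂ (cls n x hx) = cls n (σ₂ x) hx') →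
      (∀ i j : ℕ,
        τ₂ (conjCl n (a ^ i * b ^ j) ⁅b, a⁆ (commutator_mem n b a)) =
          (conjCl n (a ^ ((i : ℤ) - (j : ℤ)) * b ^ (-(j : ℤ)))
            ⁅b⁻¹, a⁻¹⁆ (commutator_mem n b⁻¹ a⁻¹))⁻¹) ∧
      (∀ i : ℕ, τ₂ (conjCl n (a ^ i) (b ^ n) (pow_n_mem n b)) =
          (conjCl n (a ^ i) ((b * a) ^ n) (pow_n_mem n (b * a)))⁻¹) ∧
      (∀ j : ℕ, τ₂ (conjCl n (b ^ j) (a ^ n) (pow_n_mem n a)) =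
          conjCl n ((b * a) ^ (-(j : ℤ))) (a ^ n) (pow_n_mem n a))) :=
  statement9_general n σ₁ σ₂ hσ₁a hσ₁b hσ₂a hσ₂b

end Fermat
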